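/- Under the null hypothesis with V = Σ + τ_0* B Bᵀ symmetric positive definite, the variance of the score under Y ~ N(0, V) equals the information entry I_{22}: Var(S(Y)) = tr((Zᵀ V^{-1} Z)²)/2, where S(y) = −(1/2)(tr(Zᵀ V^{-1} Z) − yᵀ V^{-1} Z Zᵀ V^{-1} y). -/

import Mathlib

open MeasureTheory Matrix ProbabilityTheory Filter
open scoped Classical

/-- The standard multivariate Gaussian measure `N(0, I_N)` on `ℝ^N`:
the product of `N` i.i.d. standard real Gaussians. -/
noncomputable def stdGaussian (N : ℕ) : Measure (Fin N → ℝ) :=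
  Measure.pi fun _ => gaussianReal 0 1

/-- The multivariate Gaussian measure `N(0, V)` on `ℝ^N` for a positive semidefinite
covariance matrix `V`: the pushforward of `N(0, I_N)` under the (unique symmetric psd)
square root of `V`.  (Junk value `0` if `V` is not psd.) -/
noncomputable def gaussian {N : ℕ} (V : Matrix (Fin N) (Fin N) ℝ) : Measure (Fin N → ℝ) :=
  if h : V.PosSemidef then (stdGaussian N).map (h.1.eigenvectorUnitary.1 *
    diagonal ((√·) ∘ h.1.eigenvalues) *
    (star h.1.eigenvectorUnitary : Matrix (Fin N) (Fin N) ℝ)).mulVec else 0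

/-!
If `Y = √V X` with `X ~ N(0, I)`, then `Yᵀ W Y = Xᵀ Q X` with `Q = √V W √V`. Writing
`Q = ∑ λᵢ bᵢ bᵢᵀ` in an orthonormal eigenbasis and using the rotation invariance of
`N(0, I)`, `Xᵀ Q X` has the law of `∑ λᵢ Xᵢ²` with independent `Xᵢ`, whose variance is
`∑ λᵢ² Var(X₁²) = 2 tr(Q²) = 2 tr((WV)²)`, since `E X₁⁴ = 3` is the fourth derivative at `0`
of the moment generating function `exp (t² / 2)`. For the score, `W = V⁻¹ Z Zᵀ V⁻¹`, so
`Var S = ¼ · 2 tr((V⁻¹ Z Zᵀ)²) = ½ tr((Zᵀ V⁻¹ Z)²)`.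
-/

open Real WithLp

section Moments

lemma deriv_mul_exp_half_sq {p p' q : ℝ → ℝ} (hp : ∀ t, HasDerivAt p (p' t) t)
    (hq : ∀ t, q t = p' t + t * p t) :
    deriv (fun t ↦ p t * rexp (t ^ 2 / 2)) = fun t ↦ q t * rexp (t ^ 2 / 2) := by
  funext t
  have he : HasDerivAt (fun t ↦ rexp (t ^ 2 / 2)) (rexp (t ^ 2 / 2) * t) t := by
    simpa using ((hasDerivAt_pow 2 t).div_const 2).exp
  exact ((hp t).fun_mul he).deriv.trans (by rw [hq]; ring)

lemma integral_pow_gaussianReal_eq_iteratedDeriv (n : ℕ) :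
    ∫ x, x ^ n ∂gaussianReal 0 1 = iteratedDeriv n (fun t ↦ 1 * rexp (t ^ 2 / 2)) 0 := by
  have h := iteratedDeriv_mgf_zero (X := fun x ↦ x) (μ := gaussianReal 0 1) (by simp) n
  simp only [mgf_fun_id_gaussianReal] at h
  convert h.symm using 3 <;> simp

lemma integral_sq_gaussianReal : ∫ x, x ^ 2 ∂gaussianReal 0 1 = 1 := by
  rw [integral_pow_gaussianReal_eq_iteratedDeriv, iteratedDeriv_succ', iteratedDeriv_one,
    deriv_mul_exp_half_sq (q := fun t ↦ t) (fun t ↦ hasDerivAt_const t 1) (fun t ↦ by ring),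
    deriv_mul_exp_half_sq (q := fun t ↦ 1 + t ^ 2) hasDerivAt_id' (fun t ↦ by ring)]
  norm_num

lemma integral_pow_four_gaussianReal : ∫ x, x ^ 4 ∂gaussianReal 0 1 = 3 := by
  rw [integral_pow_gaussianReal_eq_iteratedDeriv, iteratedDeriv_succ', iteratedDeriv_succ',
    iteratedDeriv_succ', iteratedDeriv_one,
    deriv_mul_exp_half_sq (q := fun t ↦ t) (fun t ↦ hasDerivAt_const t 1) (fun t ↦ by ring),
    deriv_mul_exp_half_sq (q := fun t ↦ 1 + t ^ 2) hasDerivAt_id' (fun t ↦ by ring),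
    deriv_mul_exp_half_sq (p := fun t ↦ 1 + t ^ 2) (q := fun t ↦ 3 * t + t ^ 3)
      (fun t ↦ (hasDerivAt_pow 2 t).const_add 1) (fun t ↦ by ring),
    deriv_mul_exp_half_sq (p := fun t ↦ 3 * t + t ^ 3) (q := fun t ↦ 3 + 6 * t ^ 2 + t ^ 4)
      (fun t ↦ ((hasDerivAt_id t).const_mul 3).add (hasDerivAt_pow 3 t)) (fun t ↦ by ring)]
  norm_num

lemma memLp_sq_gaussianReal : MemLp (fun x : ℝ ↦ x ^ 2) 2 (gaussianReal 0 1) := by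
  refine (memLp_two_iff_integrable_sq (by fun_prop)).2 ?_
  convert (memLp_id_gaussianReal (μ := 0) (v := 1) 4).integrable_norm_pow' using 2 with x
  simp [← pow_mul, (by decide : Even 4).pow_abs]

lemma variance_sq_gaussianReal : Var[fun x ↦ x ^ 2; gaussianReal 0 1] = 2 := by
  rw [variance_eq_sub memLp_sq_gaussianReal, integral_sq_gaussianReal]
  simp only [Pi.pow_apply, ← pow_mul, integral_pow_four_gaussianReal]
  norm_num

end Moments

section QuadraticForm

variable {n : Type*} [Fintype n]

lemma Matrix.IsHermitian.trace_mul_self_eq_sum_sq [DecidableEq n] {Q : Matrix n n ℝ}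
    (hQ : Q.IsHermitian) :
    (Q * Q).trace = ∑ i, hQ.eigenvalues i ^ 2 := by
  conv_lhs => rw [hQ.spectral_theorem, ← map_mul, Unitary.conjStarAlgAut_apply, trace_mul_cycle,
    Unitary.coe_star_mul_self, one_mul, diagonal_mul_diagonal, trace_diagonal]
  simp [sq]

lemma Matrix.IsHermitian.dotProduct_mulVec_sum_smul_eigenvectorBasis [DecidableEq n]
    {Q : Matrix n n ℝ} (hQ : Q.IsHermitian) (x : n → ℝ) :
    ofLp (∑ i, x i • hQ.eigenvectorBasis i) ⬝ᵥ Q *ᵥ ofLp (∑ i, x i • hQ.eigenvectorBasis i) =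
      ∑ i, hQ.eigenvalues i * x i ^ 2 := by
  have hQy : Q *ᵥ ofLp (∑ i, x i • hQ.eigenvectorBasis i) =
      ofLp (∑ i, (hQ.eigenvalues i * x i) • hQ.eigenvectorBasis i) := by
    simp [Matrix.mulVec_sum, Matrix.mulVec_smul, hQ.mulVec_eigenvectorBasis, smul_smul, mul_comm]
  rw [hQy, dotProduct_comm, ← star_trivial (ofLp (∑ i, x i • _)),
    ← EuclideanSpace.inner_eq_star_dotProduct, hQ.eigenvectorBasis.orthonormal.inner_sum]
  simp only [starRingEnd_apply, star_trivial]
  exact Finset.sum_congr rfl fun i _ ↦ by ring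

lemma dotProduct_mulVec_mulVec {m R : Type*} [Fintype m] [CommSemiring R] (M : Matrix n m R)
    (W : Matrix n n R) (x : m → R) :
    M *ᵥ x ⬝ᵥ W *ᵥ (M *ᵥ x) = x ⬝ᵥ (Mᵀ * W * M) *ᵥ x := by
  rw [mulVec_mulVec, dotProduct_mulVec, ← vecMul_transpose, vecMul_vecMul, dotProduct_mulVec x,
    Matrix.mul_assoc]

lemma measurable_dotProduct_mulVec (Q : Matrix n n ℝ) :
    Measurable fun x : n → ℝ ↦ x ⬝ᵥ Q *ᵥ x :=
  (continuous_id.dotProduct (continuous_const.matrix_mulVec continuous_id)).measurable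

lemma measurable_mulVec {m : Type*} [Fintype m] (M : Matrix m n ℝ) : Measurable (M *ᵥ ·) :=
  (continuous_const.matrix_mulVec continuous_id).measurable

lemma Matrix.transpose_cfc [DecidableEq n] (f : ℝ → ℝ) (V : Matrix n n ℝ) :
    (cfc f V)ᵀ = cfc f V := by
  rw [← conjTranspose_eq_transpose_of_trivial]
  exact cfc_predicate f V

lemma Matrix.PosSemidef.cfc_sqrt_mul_self [DecidableEq n] {V : Matrix n n ℝ}
    (hV : V.PosSemidef) :
    cfc Real.sqrt V * cfc Real.sqrt V = V := by
  have hsa : IsSelfAdjoint V := hV.1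
  rw [← cfc_mul ..]
  conv_rhs => rw [← cfc_id' ℝ V]
  refine cfc_congr fun x hx ↦ Real.mul_self_sqrt ?_
  rw [hV.1.spectrum_real_eq_range_eigenvalues] at hx
  obtain ⟨i, rfl⟩ := hx
  exact hV.eigenvalues_nonneg i

end QuadraticForm

section Gaussian

variable {N : ℕ}

instance : IsProbabilityMeasure (stdGaussian N) := by
  unfold _root_.stdGaussian; infer_instance

lemma stdGaussian_eq_map_orthonormalBasis
    (b : OrthonormalBasis (Fin N) ℝ (EuclideanSpace ℝ (Fin N))) :
    stdGaussian N = (stdGaussian N).map fun x ↦ ofLp (∑ i, x i • b i) := by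
  have h : (stdGaussian N).map (toLp 2) = (stdGaussian N).map fun x ↦ ∑ i, x i • b i :=
    map_pi_eq_stdGaussian.trans (stdGaussian_eq_map_pi_orthonormalBasis b)
  calc stdGaussian N = ((stdGaussian N).map (toLp 2)).map ofLp := by
        rw [Measure.map_map (by fun_prop) (by fun_prop)]; exact Measure.map_id.symm
    _ = _ := by rw [h, Measure.map_map (by fun_prop) (by fun_prop)]; rfl

lemma gaussian_eq_map_cfc_sqrt {V : Matrix (Fin N) (Fin N) ℝ} (hV : V.PosSemidef) :
    gaussian V = (stdGaussian N).map (cfc Real.sqrt V *ᵥ ·) := by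
  rw [gaussian, dif_pos hV, hV.1.cfc_eq, IsHermitian.cfc, Unitary.conjStarAlgAut_apply]
  rfl

lemma isProbabilityMeasure_gaussian {V : Matrix (Fin N) (Fin N) ℝ} (hV : V.PosSemidef) :
    IsProbabilityMeasure (gaussian V) := by
  rw [gaussian_eq_map_cfc_sqrt hV]
  exact Measure.isProbabilityMeasure_map (measurable_mulVec _).aemeasurable

lemma variance_dotProduct_mulVec_stdGaussian {Q : Matrix (Fin N) (Fin N) ℝ}
    (hQ : Q.IsHermitian) :
    Var[fun x ↦ x ⬝ᵥ Q *ᵥ x; stdGaussian N] = 2 * (Q * Q).trace := by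
  have hdiag : (fun x ↦ x ⬝ᵥ Q *ᵥ x) ∘ (fun x ↦ ofLp (∑ i, x i • hQ.eigenvectorBasis i)) =
      ∑ i, fun x : Fin N → ℝ ↦ hQ.eigenvalues i * x i ^ 2 := by
    funext x
    simp only [Function.comp_apply, hQ.dotProduct_mulVec_sum_smul_eigenvectorBasis,
      Finset.sum_apply]
  rw [stdGaussian_eq_map_orthonormalBasis hQ.eigenvectorBasis,
    variance_map (measurable_dotProduct_mulVec Q).aemeasurable
      (by fun_prop : Measurable _).aemeasurable,
    hdiag, _root_.stdGaussian, variance_sum_pi (X := fun i t ↦ hQ.eigenvalues i * t ^ 2)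
      fun i ↦ memLp_sq_gaussianReal.const_mul _]
  simp only [variance_const_mul, variance_sq_gaussianReal, hQ.trace_mul_self_eq_sum_sq,
    Finset.mul_sum]
  exact Finset.sum_congr rfl fun i _ ↦ by ring

lemma variance_dotProduct_mulVec_gaussian {V W : Matrix (Fin N) (Fin N) ℝ}
    (hV : V.PosSemidef) (hW : W.IsHermitian) :
    Var[fun y ↦ y ⬝ᵥ W *ᵥ y; gaussian V] = 2 * (W * V * (W * V)).trace := by
  set M := cfc Real.sqrt V
  have hQ : (Mᵀ * W * M).IsHermitian := by
    simpa [conjTranspose_eq_transpose_of_trivial] using isHermitian_conjTranspose_mul_mul M hW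
  rw [gaussian_eq_map_cfc_sqrt hV, variance_map (measurable_dotProduct_mulVec W).aemeasurable
    (measurable_mulVec M).aemeasurable]
  simp_rw [Function.comp_def, dotProduct_mulVec_mulVec]
  rw [variance_dotProduct_mulVec_stdGaussian hQ, transpose_cfc]
  calc 2 * (M * W * M * (M * W * M)).trace = 2 * (M * (W * (M * M) * W * M)).trace := by
        simp only [Matrix.mul_assoc]
    _ = 2 * (W * (M * M) * (W * (M * M))).trace := by
        rw [trace_mul_comm]; simp only [Matrix.mul_assoc]
    _ = _ := by rw [hV.cfc_sqrt_mul_self]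

end Gaussian

lemma trace_mul_mul_self_comm {m n R : Type*} [Fintype m] [Fintype n] [CommSemiring R]
    (A : Matrix n m R) (B : Matrix m n R) : (A * B * (A * B)).trace = (B * A * (B * A)).trace := by
  rw [← Matrix.mul_assoc, trace_mul_comm]; simp only [Matrix.mul_assoc]

theorem stmt9_general (k1 N : ℕ) (Z : Matrix (Fin N) (Fin k1) ℝ)
    (V : Matrix (Fin N) (Fin N) ℝ) (hV : V.PosDef)
    (S : (Fin N → ℝ) → ℝ)
    (hS : ∀ y, S y = -(1 / 2) * ((Zᵀ * V⁻¹ * Z).trace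
      - y ⬝ᵥ (V⁻¹ * Z * Zᵀ * V⁻¹).mulVec y)) :
    variance S (gaussian V) = ((Zᵀ * V⁻¹ * Z) * (Zᵀ * V⁻¹ * Z)).trace / 2 := by
  set W := V⁻¹ * Z * Zᵀ * V⁻¹
  have hW : W.IsHermitian := by
    have hVt : Vᵀ = V := by simpa using hV.1.eq
    simp [IsHermitian, W, Matrix.mul_assoc, transpose_nonsing_inv, hVt]
  have hWV : W * V = V⁻¹ * Z * Zᵀ := by
    simp [W, Matrix.mul_assoc, nonsing_inv_mul _ ((isUnit_iff_isUnit_det V).mp hV.isUnit)]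
  have := isProbabilityMeasure_gaussian hV.posSemidef
  rw [show S = _ from funext hS, variance_const_mul,
    variance_const_sub (measurable_dotProduct_mulVec W).aestronglyMeasurable,
    variance_dotProduct_mulVec_gaussian hV.posSemidef hW, hWV,
    trace_mul_mul_self_comm (V⁻¹ * Z), ← Matrix.mul_assoc Zᵀ]
  ring

/-- Under the null with `V = Sg + τ₀* B Bᵀ` symmetric positive definite, the variance of
the score under `Y ~ N(0, V)` equals the information entry
`I₂₂ = tr((Zᵀ V⁻¹ Z)²)/2`. -/
theorem stmt9 (n k0 k1 N : ℕ) (hn : 0 < n) (hk0 : 0 < k0) (hk1 : 0 < k1) (hN : 0 < N)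
    (B : Matrix (Fin N) (Fin k0) ℝ) (Z : Matrix (Fin N) (Fin k1) ℝ)
    (Sg : Matrix (Fin N) (Fin N) ℝ) (hSg : Sg.PosDef)
    (τ0 : ℝ) (hτ0 : 0 ≤ τ0)
    (V : Matrix (Fin N) (Fin N) ℝ) (hVdef : V = Sg + τ0 • (B * Bᵀ)) (hV : V.PosDef)
    (S : (Fin N → ℝ) → ℝ)
    (hS : ∀ y, S y = -(1 / 2) * ((Zᵀ * V⁻¹ * Z).trace
      - y ⬝ᵥ (V⁻¹ * Z * Zᵀ * V⁻¹).mulVec y)) :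
    variance S (gaussian V) = ((Zᵀ * V⁻¹ * Z) * (Zᵀ * V⁻¹ * Z)).trace / 2 :=
  stmt9_general k1 N Z V hV S hS
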